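/- arXiv:math/0504164 — 3 statements merged into one kernel-verified Lean document; each statement's English description precedes it below -/
import Mathlib

section
/- If the triangle $\{a(n,k)\}_{0 \le k \le n}$ of nonnegative reals is double LC-positive, then for any two log-concave sequences $\{x_k\}$ and $\{y_k\}$ of nonnegative reals (with no internal zeros), the sequence $z_n = \sum_{k=0}^n a(n,k) x_k y_{n-k}$ is log-concave. -/
/-!
Split `z n * z (n + 2)` and `z (n + 1) ^ 2` along the antidiagonals `p₁ + p₂ = t`. Since `x` is
log-concave without internal zeros, `x p₁ * x p₂` grows with `min p₁ p₂`, so it is a nonnegative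
combination of the indicators of `i ≤ p₁ ∧ i ≤ p₂`; the same holds for the `y`-factors with the
complementary indices `m - p`. It remains to compare, for each `t, i, j`, the sums of
`a m₁ p₁ * a m₂ p₂` over `p₁ + p₂ = t` with `i ≤ p₁, p₂` and `p₁ + j ≤ m₁`, `p₂ + j ≤ m₂`, for the
row pairs `(n, n + 2)` and `(n + 1, n + 1)`. If `t + j ≤ n + 1 + i` the upper constraints are
vacuous for `(n + 1, n + 1)` and the comparison is the `q^t`-coefficient of the `q`-log-concavity
of `𝒜_i`; otherwise reversing the rows turns it into the same statement for the reciprocal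
triangle.
-/

open Polynomial Finset

section LogConcave

variable (s : ℕ → ℝ)

lemma mul_succ_le_succ_mul_of_logConcave (h0 : ∀ k, 0 ≤ s k)
    (hlc : ∀ k : ℕ, s k * s (k + 2) ≤ s (k + 1) ^ 2)
    (hniz : ∀ i j k : ℕ, i < j → j < k → s i ≠ 0 → s k ≠ 0 → s j ≠ 0) {i j : ℕ} (hij : i ≤ j) :
    s i * s (j + 1) ≤ s (i + 1) * s j := by
  induction j, hij using Nat.le_induction with
  | base => rw [mul_comm]
  | succ j hij ih =>
    rcases (h0 (j + 1)).lt_or_eq with hpos | hzero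
    · refine le_of_mul_le_mul_right ?_ hpos
      calc s i * s (j + 2) * s (j + 1) = s i * s (j + 1) * s (j + 2) := by ring
        _ ≤ s (i + 1) * s j * s (j + 2) := by gcongr; exact h0 _
        _ = s (i + 1) * (s j * s (j + 2)) := by ring
        _ ≤ s (i + 1) * s (j + 1) ^ 2 := mul_le_mul_of_nonneg_left (hlc j) (h0 _)
        _ = s (i + 1) * s (j + 1) * s (j + 1) := by ring
    · have : s i * s (j + 2) = 0 := by
        by_contra hne
        exact hniz i (j + 1) (j + 2) (by omega) (by omega) (left_ne_zero_of_mul hne)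
          (right_ne_zero_of_mul hne) hzero.symm
      rw [this, ← hzero, mul_zero]

def pairIncrement (t : ℕ) : ℕ → ℝ
  | 0 => s 0 * s t
  | i + 1 => s (i + 1) * s (t - (i + 1)) - s i * s (t - i)

lemma sum_range_pairIncrement (t m : ℕ) :
    ∑ i ∈ range (m + 1), pairIncrement s t i = s m * s (t - m) := by
  induction m with
  | zero => simp [pairIncrement]
  | succ m ih => rw [sum_range_succ, ih, pairIncrement]; ring

lemma pairIncrement_nonneg (h0 : ∀ k, 0 ≤ s k)
    (hmono : ∀ {i j : ℕ}, i ≤ j → s i * s (j + 1) ≤ s (i + 1) * s j)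
    {t i : ℕ} (hi : 2 * i ≤ t) : 0 ≤ pairIncrement s t i := by
  cases i with
  | zero => exact mul_nonneg (h0 0) (h0 t)
  | succ i =>
    have h := hmono (show i ≤ t - (i + 1) by omega)
    rw [show t - (i + 1) + 1 = t - i by omega] at h
    rw [pairIncrement, sub_nonneg]
    linarith

lemma mul_eq_sum_pairIncrement {p q t : ℕ} (h : p + q = t) :
    s p * s q = ∑ i ∈ range (t / 2 + 1), if i ≤ p ∧ i ≤ q then pairIncrement s t i else 0 := by
  wlog hpq : p ≤ q generalizing p q
  · simpa only [mul_comm, and_comm] using this (q := p) (by omega) (by omega)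
  have hfilter : (range (t / 2 + 1)).filter (fun i => i ≤ p ∧ i ≤ q) = range (p + 1) := by
    ext i; simp only [mem_filter, mem_range]; omega
  rw [← sum_filter, hfilter, sum_range_pairIncrement, show t - p = q by omega]

end LogConcave

section Triangle

variable (a : ℕ → ℕ → ℝ)

/-- The polynomial `𝒜_r(n; q) = ∑_{k=r}^n a(n,k) q^k`. -/
noncomputable def rowPoly (r n : ℕ) : ℝ[X] := ∑ k ∈ Icc r n, C (a n k) * X ^ k

def reciprocal : ℕ → ℕ → ℝ := fun n k => a n (n - k)

def IsLCPositive : Prop :=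
  ∀ r n : ℕ, 1 ≤ n → ∀ t : ℕ,
    0 ≤ ((rowPoly a r n) ^ 2 - rowPoly a r (n - 1) * rowPoly a r (n + 1)).coeff t

/-- The part of the coefficient of `q^t` in `𝒜_i(m₁; q) 𝒜_i(m₂; q)` coming from pairs
of exponents that also stay `j` below the ends of their rows. -/
def bandProd (m₁ m₂ i j t : ℕ) : ℝ :=
  ∑ p ∈ antidiagonal t,
    if i ≤ p.1 ∧ i ≤ p.2 ∧ p.1 + j ≤ m₁ ∧ p.2 + j ≤ m₂ then a m₁ p.1 * a m₂ p.2 else 0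

lemma coeff_rowPoly (r n k : ℕ) :
    (rowPoly a r n).coeff k = if r ≤ k ∧ k ≤ n then a n k else 0 := by
  simp only [rowPoly, finsetSum_coeff, coeff_C_mul_X_pow, sum_ite_eq, mem_Icc]

variable {a}

lemma bandProd_le_coeff_mul (hnonneg : ∀ n k : ℕ, k ≤ n → 0 ≤ a n k) (m₁ m₂ i j t : ℕ) :
    bandProd a m₁ m₂ i j t ≤ (rowPoly a i m₁ * rowPoly a i m₂).coeff t := by
  rw [bandProd, coeff_mul]
  refine sum_le_sum fun p _ => ?_
  rw [coeff_rowPoly, coeff_rowPoly, ite_zero_mul_ite_zero]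
  split_ifs with hband hrow hrow
  · rfl
  · omega
  · exact mul_nonneg (hnonneg _ _ hrow.1.2) (hnonneg _ _ hrow.2.2)
  · rfl

lemma bandProd_eq_coeff_mul {m₁ m₂ i j t : ℕ} (h₁ : t + j ≤ m₁ + i) (h₂ : t + j ≤ m₂ + i) :
    bandProd a m₁ m₂ i j t = (rowPoly a i m₁ * rowPoly a i m₂).coeff t := by
  rw [bandProd, coeff_mul]
  refine sum_congr rfl fun p hp => ?_
  rw [HasAntidiagonal.mem_antidiagonal] at hp
  rw [coeff_rowPoly, coeff_rowPoly, ite_zero_mul_ite_zero]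
  exact if_congr (by omega) rfl rfl

lemma bandProd_eq_bandProd_reciprocal {m₁ m₂ i j t : ℕ} (ht : t ≤ m₁ + m₂) :
    bandProd a m₁ m₂ i j t = bandProd (reciprocal a) m₁ m₂ j i (m₁ + m₂ - t) := by
  simp only [bandProd, ← sum_filter]
  refine sum_nbij' (fun p => (m₁ - p.1, m₂ - p.2)) (fun p => (m₁ - p.1, m₂ - p.2))
    ?_ ?_ ?_ ?_ ?_
  all_goals intro p hp; simp only [mem_filter, HasAntidiagonal.mem_antidiagonal] at hp ⊢
  · omega
  · omega
  · exact Prod.ext (by omega) (by omega)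
  · exact Prod.ext (by omega) (by omega)
  · simp only [reciprocal, show m₁ - (m₁ - p.1) = p.1 by omega,
      show m₂ - (m₂ - p.2) = p.2 by omega]

lemma bandProd_le_of_isLCPositive (hnonneg : ∀ n k : ℕ, k ≤ n → 0 ≤ a n k)
    (hLC : IsLCPositive a) {n i j t : ℕ} (h : t + j ≤ n + 1 + i) :
    bandProd a n (n + 2) i j t ≤ bandProd a (n + 1) (n + 1) i j t := by
  have hcoeff := hLC i (n + 1) le_add_self t
  rw [sq, coeff_sub, sub_nonneg] at hcoeff
  calc bandProd a n (n + 2) i j t ≤ (rowPoly a i n * rowPoly a i (n + 2)).coeff t :=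
        bandProd_le_coeff_mul hnonneg _ _ _ _ _
    _ ≤ (rowPoly a i (n + 1) * rowPoly a i (n + 1)).coeff t := hcoeff
    _ = bandProd a (n + 1) (n + 1) i j t := (bandProd_eq_coeff_mul h h).symm

lemma bandProd_le_of_doubleLCPositive (hnonneg : ∀ n k : ℕ, k ≤ n → 0 ≤ a n k)
    (hLC : IsLCPositive a) (hLC' : IsLCPositive (reciprocal a)) {n i j t : ℕ}
    (ht : t ≤ 2 * n + 2) :
    bandProd a n (n + 2) i j t ≤ bandProd a (n + 1) (n + 1) i j t := by
  rcases le_or_gt (t + j) (n + 1 + i) with h | h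
  · exact bandProd_le_of_isLCPositive hnonneg hLC h
  · have hnonneg' : ∀ n k : ℕ, k ≤ n → 0 ≤ reciprocal a n k :=
      fun n k _ => hnonneg n (n - k) (Nat.sub_le n k)
    rw [bandProd_eq_bandProd_reciprocal (m₁ := n) (by omega),
      bandProd_eq_bandProd_reciprocal (m₁ := n + 1) (by omega),
      show n + 1 + (n + 1) - t = n + (n + 2) - t by omega]
    exact bandProd_le_of_isLCPositive hnonneg' hLC' (by omega)

end Triangle

section Convolution

lemma sum_product_range_eq_sum_antidiagonal {M : Type*} [AddCommMonoid M] (f : ℕ × ℕ → M)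
    (m₁ m₂ : ℕ) :
    ∑ p ∈ range (m₁ + 1) ×ˢ range (m₂ + 1), f p =
      ∑ t ∈ range (m₁ + m₂ + 1), ∑ p ∈ antidiagonal t, if p.1 ≤ m₁ ∧ p.2 ≤ m₂ then f p else 0 := by
  have hfiber : ∀ t, (antidiagonal t).filter (fun p => p.1 ≤ m₁ ∧ p.2 ≤ m₂) =
      (range (m₁ + 1) ×ˢ range (m₂ + 1)).filter (fun p => p.1 + p.2 = t) := by
    intro t; ext p
    simp only [mem_filter, HasAntidiagonal.mem_antidiagonal, mem_product, mem_range]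
    omega
  simp only [← sum_filter, hfiber]
  refine (sum_fiberwise_of_maps_to (fun p hp => ?_) f).symm
  simp only [mem_product, mem_range] at hp ⊢
  omega

variable (a : ℕ → ℕ → ℝ) (x y : ℕ → ℝ)

def triangleConv (n : ℕ) : ℝ := ∑ k ∈ range (n + 1), a n k * x k * y (n - k)

lemma ite_mul_eq_sum_pairIncrement {m₁ m₂ N t : ℕ} (hN : m₁ + m₂ = N) {p : ℕ × ℕ}
    (hp : p.1 + p.2 = t) :
    (if p.1 ≤ m₁ ∧ p.2 ≤ m₂ then
        a m₁ p.1 * x p.1 * y (m₁ - p.1) * (a m₂ p.2 * x p.2 * y (m₂ - p.2)) else 0) =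
      ∑ i ∈ range (t / 2 + 1), ∑ j ∈ range ((N - t) / 2 + 1),
        pairIncrement x t i * pairIncrement y (N - t) j *
          if i ≤ p.1 ∧ i ≤ p.2 ∧ p.1 + j ≤ m₁ ∧ p.2 + j ≤ m₂ then a m₁ p.1 * a m₂ p.2 else 0 := by
  split_ifs with hrow
  · have hy : (m₁ - p.1) + (m₂ - p.2) = N - t := by omega
    calc a m₁ p.1 * x p.1 * y (m₁ - p.1) * (a m₂ p.2 * x p.2 * y (m₂ - p.2))
        = x p.1 * x p.2 * (y (m₁ - p.1) * y (m₂ - p.2)) * (a m₁ p.1 * a m₂ p.2) := by ring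
      _ = _ := by
        rw [mul_eq_sum_pairIncrement x hp, mul_eq_sum_pairIncrement y hy, sum_mul_sum, sum_mul]
        refine sum_congr rfl fun i _ => ?_
        rw [sum_mul]
        refine sum_congr rfl fun j _ => ?_
        rw [ite_zero_mul_ite_zero, ite_zero_mul, mul_ite, mul_zero]
        exact if_congr (by omega) rfl rfl
  · refine (sum_eq_zero fun i _ => sum_eq_zero fun j _ => ?_).symm
    rw [if_neg (by omega), mul_zero]

lemma triangleConv_mul_triangleConv {m₁ m₂ N : ℕ} (hN : m₁ + m₂ = N) :
    triangleConv a x y m₁ * triangleConv a x y m₂ =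
      ∑ t ∈ range (N + 1), ∑ i ∈ range (t / 2 + 1), ∑ j ∈ range ((N - t) / 2 + 1),
        pairIncrement x t i * pairIncrement y (N - t) j * bandProd a m₁ m₂ i j t := by
  rw [triangleConv, triangleConv, sum_mul_sum, ← sum_product',
    sum_product_range_eq_sum_antidiagonal, hN]
  refine sum_congr rfl fun t _ => ?_
  rw [sum_congr rfl fun p hp =>
    ite_mul_eq_sum_pairIncrement a x y hN (HasAntidiagonal.mem_antidiagonal.mp hp), sum_comm]
  refine sum_congr rfl fun i _ => ?_
  rw [sum_comm]
  simp only [bandProd, mul_sum]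

end Convolution

theorem stmt_9_general (a : ℕ → ℕ → ℝ)
    (hanonneg : ∀ n k : ℕ, k ≤ n → 0 ≤ a n k)
    (A Astar : ℕ → ℕ → ℝ[X])
    (hA : ∀ r n : ℕ, A r n = ∑ k ∈ Icc r n, Polynomial.C (a n k) * X ^ k)
    (hAstar : ∀ r n : ℕ, Astar r n = ∑ k ∈ Icc r n, Polynomial.C (a n (n - k)) * X ^ k)
    (hLC : ∀ r n : ℕ, 1 ≤ n → ∀ t : ℕ,
      0 ≤ ((A r n) ^ 2 - A r (n - 1) * A r (n + 1)).coeff t)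
    (hLCstar : ∀ r n : ℕ, 1 ≤ n → ∀ t : ℕ,
      0 ≤ ((Astar r n) ^ 2 - Astar r (n - 1) * Astar r (n + 1)).coeff t)
    (x y : ℕ → ℝ)
    (hxnonneg : ∀ k, 0 ≤ x k) (hynonneg : ∀ k, 0 ≤ y k)
    (hxlc : ∀ k : ℕ, x k * x (k + 2) ≤ x (k + 1) ^ 2)
    (hylc : ∀ k : ℕ, y k * y (k + 2) ≤ y (k + 1) ^ 2)
    (hxniz : ∀ i j k : ℕ, i < j → j < k → x i ≠ 0 → x k ≠ 0 → x j ≠ 0)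
    (hyniz : ∀ i j k : ℕ, i < j → j < k → y i ≠ 0 → y k ≠ 0 → y j ≠ 0)
    (z : ℕ → ℝ)
    (hz : ∀ n : ℕ, z n = ∑ k ∈ Finset.range (n + 1), a n k * x k * y (n - k)) :
    ∀ n : ℕ, z n * z (n + 2) ≤ z (n + 1) ^ 2 := by
  obtain rfl : A = rowPoly a := funext₂ hA
  obtain rfl : Astar = rowPoly (reciprocal a) := funext₂ hAstar
  obtain rfl : z = triangleConv a x y := funext hz
  intro n
  rw [triangleConv_mul_triangleConv a x y (N := 2 * n + 2) (by ring), sq,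
    triangleConv_mul_triangleConv a x y (N := 2 * n + 2) (by ring)]
  gcongr with t ht i hi j hj
  · rw [mem_range] at hi hj
    exact mul_nonneg
      (pairIncrement_nonneg x hxnonneg (mul_succ_le_succ_mul_of_logConcave x hxnonneg hxlc hxniz)
        (by omega))
      (pairIncrement_nonneg y hynonneg (mul_succ_le_succ_mul_of_logConcave y hynonneg hylc hyniz)
        (by omega))
  · rw [mem_range] at ht
    exact bandProd_le_of_doubleLCPositive hanonneg hLC hLCstar (by omega)

/-- Theorem 2: double LC-positive triangles are double PLC: if
both `{a n k}` and its reciprocal `{a n (n-k)}` are LC-positive, then for any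
two nonnegative log-concave sequences `x`, `y` (no internal zeros), the sequence
`z n = ∑_{k=0}^n a n k * x k * y (n-k)` is log-concave. -/
theorem stmt_9 (a : ℕ → ℕ → ℝ)
    (hanonneg : ∀ n k : ℕ, k ≤ n → 0 ≤ a n k)
    (ha0 : ∀ n k : ℕ, n < k → a n k = 0)
    (A Astar : ℕ → ℕ → ℝ[X])
    (hA : ∀ r n : ℕ, A r n = ∑ k ∈ Icc r n, Polynomial.C (a n k) * X ^ k)
    (hAstar : ∀ r n : ℕ, Astar r n = ∑ k ∈ Icc r n, Polynomial.C (a n (n - k)) * X ^ k)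
    (hLC : ∀ r n : ℕ, 1 ≤ n → ∀ t : ℕ,
      0 ≤ ((A r n) ^ 2 - A r (n - 1) * A r (n + 1)).coeff t)
    (hLCstar : ∀ r n : ℕ, 1 ≤ n → ∀ t : ℕ,
      0 ≤ ((Astar r n) ^ 2 - Astar r (n - 1) * Astar r (n + 1)).coeff t)
    (x y : ℕ → ℝ)
    (hxnonneg : ∀ k, 0 ≤ x k) (hynonneg : ∀ k, 0 ≤ y k)
    (hxlc : ∀ k : ℕ, x k * x (k + 2) ≤ x (k + 1) ^ 2)
    (hylc : ∀ k : ℕ, y k * y (k + 2) ≤ y (k + 1) ^ 2)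
    (hxniz : ∀ i j k : ℕ, i < j → j < k → x i ≠ 0 → x k ≠ 0 → x j ≠ 0)
    (hyniz : ∀ i j k : ℕ, i < j → j < k → y i ≠ 0 → y k ≠ 0 → y j ≠ 0)
    (z : ℕ → ℝ)
    (hz : ∀ n : ℕ, z n = ∑ k ∈ Finset.range (n + 1), a n k * x k * y (n - k)) :
    ∀ n : ℕ, z n * z (n + 2) ≤ z (n + 1) ^ 2 :=
  stmt_9_general a hanonneg A Astar hA hAstar hLC hLCstar x y hxnonneg hynonneg hxlc hylc hxniz
    hyniz z hz
end

section
/- If the triangle $\{a(n,k)\}$ satisfies: (A) for each $n,t$ there exists an index $m = m(n,t)$ such that $a_k(n,t) < 0$ for $k < m$ and $a_k(n,t) \ge 0$ for $k \ge m$, and (B) the sequence of polynomials $\mathscr{A}_0(n;q) = \sum_{k=0}^n a(n,k)q^k$ is $q$-log-concave, then $\{a(n,k)\}$ is LC-positive. -/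
/-!
The coefficient of `q^t` in `𝒜_r(n;q)² - 𝒜_r(n-1;q) 𝒜_r(n+1;q)` is the tail sum
`∑_{r ≤ k ≤ ⌊t/2⌋} a_k(n,t)`, obtained by pairing the terms `k` and `t - k` of the Cauchy
product. For `r = 0` this is nonnegative by q-log-concavity. Since the terms `a_k(n,t)` change
sign at most once, from negative to nonnegative, every tail of a sum with nonnegative total
is again nonnegative.
-/

open Polynomial Finset

theorem sum_Icc_nonneg_of_sign_change {M : Type*} [AddCommMonoid M] [PartialOrder M]
    [IsOrderedAddMonoid M] {f : ℕ → M} {N m : ℕ}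
    (hneg : ∀ k ≤ N, k < m → f k ≤ 0) (hpos : ∀ k ≤ N, m ≤ k → 0 ≤ f k)
    (hsum : 0 ≤ ∑ k ∈ Icc 0 N, f k) (r : ℕ) : 0 ≤ ∑ k ∈ Icc r N, f k := by
  rcases le_or_gt m r with hmr | hrm
  · exact sum_nonneg fun k hk => hpos k (mem_Icc.1 hk).2 (hmr.trans (mem_Icc.1 hk).1)
  · refine hsum.trans <| sum_le_sum_of_subset_of_nonpos' (Icc_subset_Icc_left r.zero_le) ?_
    intro k hk hkr
    simp only [mem_Icc, not_and, not_le] at hk hkr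
    exact hneg k hk.2 (by omega)

theorem sum_range_succ_eq_sum_Icc_half {M : Type*} [AddCommMonoid M] (t : ℕ) (g : ℕ → M) :
    ∑ k ∈ range (t + 1), g k =
      ∑ k ∈ Icc 0 (t / 2), if 2 * k = t then g k else g k + g (t - k) := by
  have hsplit : range (t + 1) = Icc 0 (t / 2) ∪ Icc (t / 2 + 1) t := by
    ext x; simp only [mem_range, mem_union, mem_Icc]; omega
  have hdisj : Disjoint (Icc 0 (t / 2)) (Icc (t / 2 + 1) t) :=
    disjoint_left.2 fun x hx hx' => by simp only [mem_Icc] at hx hx'; omega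
  have hreflect : ∑ k ∈ Icc (t / 2 + 1) t, g k
      = ∑ k ∈ Icc 0 (t / 2) with ¬2 * k = t, g (t - k) := by
    refine sum_nbij' (t - ·) (t - ·) ?_ ?_ ?_ ?_ ?_ <;> intro x hx <;>
      simp only [mem_filter, mem_Icc] at hx ⊢
    all_goals first | omega | exact congrArg g (by omega)
  rw [hsplit, sum_union hdisj, hreflect, sum_filter, ← sum_add_distrib]
  refine sum_congr rfl fun k _ => ?_
  by_cases h : 2 * k = t <;> simp [h]

/-- The paper's `a_k(n,t)`, with `f`, `g`, `h` the rows `n`, `n - 1`, `n + 1` of the triangle. -/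
def lcTerm {R : Type*} [CommRing R] (f g h : ℕ → R) (t k : ℕ) : R :=
  if 2 * k = t then f k ^ 2 - g k * h k
  else 2 * f k * f (t - k) - g k * h (t - k) - h k * g (t - k)

theorem coeff_sq_sub_mul_eq_sum_lcTerm {R : Type*} [CommRing R] (p q s : R[X]) {r : ℕ}
    (hp : ∀ k < r, p.coeff k = 0) (hq : ∀ k < r, q.coeff k = 0) (hs : ∀ k < r, s.coeff k = 0)
    (t : ℕ) :
    (p ^ 2 - q * s).coeff t = ∑ k ∈ Icc r (t / 2), lcTerm p.coeff q.coeff s.coeff t k := by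
  have hpaired : (p ^ 2 - q * s).coeff t =
      ∑ k ∈ Icc 0 (t / 2), lcTerm p.coeff q.coeff s.coeff t k := by
    rw [coeff_sub, sq, coeff_mul, coeff_mul, Nat.sum_antidiagonal_eq_sum_range_succ_mk,
      Nat.sum_antidiagonal_eq_sum_range_succ_mk, ← sum_sub_distrib,
      sum_range_succ_eq_sum_Icc_half]
    refine sum_congr rfl fun k hk => ?_
    simp only [mem_Icc] at hk
    unfold lcTerm
    split_ifs with h
    · rw [show t - k = k by omega]; ring
    · rw [show t - (t - k) = k by omega]; ring
  rw [hpaired]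
  refine (sum_subset (Icc_subset_Icc_left r.zero_le) fun k hk₀ hk => ?_).symm
  have hkr : k < r := by simp only [mem_Icc, not_and, not_le] at hk₀ hk; omega
  simp [lcTerm, hp k hkr, hq k hkr, hs k hkr]

theorem coeff_sum_Icc_C_mul_X_pow {R : Type*} [Semiring R] (f : ℕ → R) (r n j : ℕ) :
    (∑ k ∈ Icc r n, C (f k) * X ^ k).coeff j = if j ∈ Icc r n then f j else 0 := by
  simp only [finsetSum_coeff, coeff_C_mul_X_pow, sum_ite_eq]

theorem stmt_10_general (a : ℕ → ℕ → ℝ)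
    (ha0 : ∀ n k : ℕ, n < k → a n k = 0)
    (A : ℕ → ℕ → ℝ[X])
    (hA : ∀ r n : ℕ, A r n = ∑ k ∈ Icc r n, Polynomial.C (a n k) * X ^ k)
    (aknt : ℕ → ℕ → ℕ → ℝ)
    (haknt : ∀ n t k : ℕ, aknt n t k =
      if 2 * k = t then a n k ^ 2 - a (n - 1) k * a (n + 1) k
      else 2 * a n k * a n (t - k) - a (n - 1) k * a (n + 1) (t - k) -
        a (n + 1) k * a (n - 1) (t - k))
    (hcondA : ∀ n t : ℕ, 1 ≤ n → ∃ m : ℕ, ∀ k : ℕ, k ≤ t / 2 →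
      (k < m → aknt n t k < 0) ∧ (m ≤ k → 0 ≤ aknt n t k))
    (hcondB : ∀ n : ℕ, 1 ≤ n → ∀ t : ℕ,
      0 ≤ ((A 0 n) ^ 2 - A 0 (n - 1) * A 0 (n + 1)).coeff t) :
    ∀ r n : ℕ, 1 ≤ n → ∀ t : ℕ,
      0 ≤ ((A r n) ^ 2 - A r (n - 1) * A r (n + 1)).coeff t := by
  have hcoeff : ∀ r n j, (A r n).coeff j = if r ≤ j then a n j else 0 := by
    intro r n j
    rw [hA, coeff_sum_Icc_C_mul_X_pow]
    by_cases hjn : j ≤ n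
    · simp [hjn]
    · simp [hjn, ha0 n j (by omega)]
  have hkey : ∀ r n t, ((A r n) ^ 2 - A r (n - 1) * A r (n + 1)).coeff t =
      ∑ k ∈ Icc r (t / 2), aknt n t k := by
    intro r n t
    rw [coeff_sq_sub_mul_eq_sum_lcTerm _ _ _ (r := r) (by simp +contextual [hcoeff])
      (by simp +contextual [hcoeff]) (by simp +contextual [hcoeff])]
    refine sum_congr rfl fun k hk => ?_
    simp only [mem_Icc] at hk
    simp only [lcTerm, haknt, hcoeff, if_pos hk.1, if_pos (show r ≤ t - k by omega)]
  intro r n hn t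
  obtain ⟨m, hm⟩ := hcondA n t hn
  rw [hkey]
  exact sum_Icc_nonneg_of_sign_change (fun k hk hkm => ((hm k hk).1 hkm).le)
    (fun k hk hmk => (hm k hk).2 hmk) (hkey 0 n t ▸ hcondB n hn t) r

/-- Corollary 2.5: if (A) for each `n ≥ 1` and `t` there is an
index `m` such that `a_k(n,t) < 0` for `k < m` and `a_k(n,t) ≥ 0` for `k ≥ m`
(over the range `k ≤ ⌊t/2⌋`), and (B) the sequence `𝒜_0(n;q)` is
q-log-concave, then the triangle is LC-positive. -/
theorem stmt_10 (a : ℕ → ℕ → ℝ)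
    (hanonneg : ∀ n k : ℕ, k ≤ n → 0 ≤ a n k)
    (ha0 : ∀ n k : ℕ, n < k → a n k = 0)
    (A : ℕ → ℕ → ℝ[X])
    (hA : ∀ r n : ℕ, A r n = ∑ k ∈ Icc r n, Polynomial.C (a n k) * X ^ k)
    (aknt : ℕ → ℕ → ℕ → ℝ)
    (haknt : ∀ n t k : ℕ, aknt n t k =
      if 2 * k = t then a n k ^ 2 - a (n - 1) k * a (n + 1) k
      else 2 * a n k * a n (t - k) - a (n - 1) k * a (n + 1) (t - k) -
        a (n + 1) k * a (n - 1) (t - k))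
    (hcondA : ∀ n t : ℕ, 1 ≤ n → ∃ m : ℕ, ∀ k : ℕ, k ≤ t / 2 →
      (k < m → aknt n t k < 0) ∧ (m ≤ k → 0 ≤ aknt n t k))
    (hcondB : ∀ n : ℕ, 1 ≤ n → ∀ t : ℕ,
      0 ≤ ((A 0 n) ^ 2 - A 0 (n - 1) * A 0 (n + 1)).coeff t) :
    ∀ r n : ℕ, 1 ≤ n → ∀ t : ℕ,
      0 ≤ ((A r n) ^ 2 - A r (n - 1) * A r (n + 1)).coeff t :=
  stmt_10_general a ha0 A hA aknt haknt hcondA hcondB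
end

section
/- Let $\lambda, \mu \ge 0$ and $\{u_k\}_{k \in \mathbb{Z}}$ a log-concave sequence of nonnegative reals (no internal zeros). Define $a(n,k) = \mathcal{L}^n[\lambda,\mu](u)_k$ where $\mathcal{L}[\lambda,\mu](u)_k = \lambda u_k + \mu u_{k-1}$. Then the triangle $\{a(n,k)\}_{0 \le k \le n}$ is double LC-positive; that is, for each $r$, both sequences of polynomials $\sum_{k=r}^n a(n,k)q^k$ and $\sum_{k=r}^n a(n,n-k)q^k$ (in $n$) are $q$-log-concave. -/
open Polynomial Finset

/-- The operator `ℒ[λ,μ]` on doubly infinite sequences: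
`ℒ(u)_k = λ u_k + μ u_{k-1}`. -/
def Lop (lam mu : ℝ) (u : ℤ → ℝ) : ℤ → ℝ := fun k => lam * u k + mu * u (k - 1)

/-
The sequences `v_n = ℒⁿ u` stay nonnegative and Pólya frequency of order two. Writing `P, Q, R`
for the truncated generating polynomials of `v_m, v_{m+1}, v_{m+2}` over `[r, m]`, `[r, m+1]`,
`[r, m+2]`, the recurrence
`Q = (λ + μq) P + λ v_m(m+1) q^{m+1} + μ v_m(r-1) q^r` (and its analogue for `R`) gives
`Q² - P R = λ q^{m+1} (v_m(m+1) Q - v_{m+1}(m+2) q P) + μ q^r (v_m(r-1) Q - v_{m+1}(r-1) P)`,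
and each coefficient of the two brackets is a product of nonnegative terms or a `2 × 2` minor of
`v_m`. The reversed rows `j ↦ v_n(n - j)` are the iterates of `ℒ[μ,λ]` on `j ↦ u(-j)`, so the
same argument applies to them.
-/

/-- Pólya frequency of order two; for nonnegative sequences this is log-concavity without
internal zeros. -/
def IsPF2 (v : ℤ → ℝ) : Prop := ∀ ⦃i j : ℤ⦄, i ≤ j → v (i - 1) * v (j + 1) ≤ v i * v j

theorem isPF2_of_logConcave {u : ℤ → ℝ} (hu0 : ∀ k, 0 ≤ u k)
    (hulc : ∀ k : ℤ, u (k - 1) * u (k + 1) ≤ u k ^ 2)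
    (huniz : ∀ i j k : ℤ, i < j → j < k → u i ≠ 0 → u k ≠ 0 → u j ≠ 0) : IsPF2 u := by
  intro i j hij
  induction j, hij using Int.leInduction with
  | base => simpa [sq] using hulc i
  | succ j hij ih =>
    have hlc : u j * u (j + 1 + 1) ≤ u (j + 1) ^ 2 := by simpa using hulc (j + 1)
    rcases (hu0 (j + 1)).eq_or_lt with hz | hpos
    · have hzero : u (i - 1) * u (j + 1 + 1) = 0 := by
        by_contra hne
        obtain ⟨h1, h2⟩ := mul_ne_zero_iff.mp hne
        exact huniz _ _ _ (by omega) (by omega) h1 h2 hz.symm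
      rw [hzero]
      exact mul_nonneg (hu0 _) (hu0 _)
    · refine le_of_mul_le_mul_left ?_ hpos
      calc u (j + 1) * (u (i - 1) * u (j + 1 + 1))
          = u (i - 1) * u (j + 1) * u (j + 1 + 1) := by ring
        _ ≤ u i * u j * u (j + 1 + 1) := mul_le_mul_of_nonneg_right ih (hu0 _)
        _ = u i * (u j * u (j + 1 + 1)) := by ring
        _ ≤ u i * u (j + 1) ^ 2 := mul_le_mul_of_nonneg_left hlc (hu0 _)
        _ = u (j + 1) * (u i * u (j + 1)) := by ring

namespace IsPF2

variable {v : ℤ → ℝ}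

theorem mul_le_of_le_add_one (hv : IsPF2 v) {i j : ℤ} (h : i ≤ j + 1) :
    v (i - 1) * v (j + 1) ≤ v i * v j := by
  rcases h.lt_or_eq with h | rfl
  · exact hv (by omega)
  · rw [add_sub_cancel_right, mul_comm]

theorem comp_sub (hv : IsPF2 v) (c : ℤ) : IsPF2 (fun j => v (c - j)) := by
  intro i j hij
  have h := hv (show c - j ≤ c - i by omega)
  rw [show c - j - 1 = c - (j + 1) by ring, show c - i + 1 = c - (i - 1) by ring] at h
  linarith

theorem Lop {lam mu : ℝ} (hlam : 0 ≤ lam) (hmu : 0 ≤ mu) (hv : IsPF2 v) :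
    IsPF2 (Lop lam mu v) := by
  intro i j hij
  have h1 := hv hij
  have h2 := hv (show i - 1 ≤ j - 1 by omega)
  have h3 := hv (show i - 1 ≤ j by omega)
  have h4 := hv.mul_le_of_le_add_one (show i ≤ j - 1 + 1 by omega)
  simp only [sub_add_cancel] at h2 h4
  simp only [_root_.Lop, add_sub_cancel_right]
  nlinarith [mul_nonneg (mul_nonneg hlam hlam) (sub_nonneg.2 h1),
    mul_nonneg (mul_nonneg hmu hmu) (sub_nonneg.2 h2),
    mul_nonneg (mul_nonneg hlam hmu) (sub_nonneg.2 (h3.trans h4))]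

end IsPF2

section Lop

variable {lam mu : ℝ} {v : ℤ → ℝ}

theorem Lop_nonneg (hlam : 0 ≤ lam) (hmu : 0 ≤ mu) (hv : ∀ k, 0 ≤ v k) (k : ℤ) :
    0 ≤ Lop lam mu v k :=
  add_nonneg (mul_nonneg hlam (hv _)) (mul_nonneg hmu (hv _))

theorem Lop_comp_sub (c : ℤ) :
    (fun j => Lop lam mu v (c + 1 - j)) = Lop mu lam (fun j => v (c - j)) := by
  funext j
  simp only [Lop]
  rw [show c + 1 - j - 1 = c - j by ring, show c + 1 - j = c - (j - 1) by ring]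
  ring

theorem iterate_Lop_comp_sub (c : ℤ) (n : ℕ) :
    (fun j => (Lop lam mu)^[n] v (c + n - j)) = (Lop mu lam)^[n] (fun j => v (c - j)) := by
  induction n with
  | zero => simp
  | succ n ih =>
    simp only [Function.iterate_succ_apply', ← ih, ← Lop_comp_sub, Nat.cast_succ, add_assoc]

end Lop

noncomputable def genPoly (v : ℤ → ℝ) (r n : ℕ) : ℝ[X] := ∑ k ∈ Icc r n, C (v k) * X ^ k

section genPoly

variable {v : ℤ → ℝ} {r n : ℕ}

theorem genPoly_linearCombination (a b : ℝ) (u v : ℤ → ℝ) (r n : ℕ) :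
    genPoly (fun k => a * u k + b * v k) r n = C a * genPoly u r n + C b * genPoly v r n := by
  simp only [genPoly, mul_sum, ← sum_add_distrib, C_add, C_mul]
  exact sum_congr rfl fun _ _ => by ring

theorem genPoly_succ_right (h : r ≤ n + 1) :
    genPoly v r (n + 1) = genPoly v r n + C (v (n + 1)) * X ^ (n + 1) := by
  rw [genPoly, sum_Icc_succ_top h, genPoly, Nat.cast_succ]

theorem genPoly_eq_C_mul_X_pow_add (h : r ≤ n) :
    genPoly v r n = C (v r) * X ^ r + genPoly v (r + 1) n := by
  rw [genPoly, ← insert_Icc_add_one_left_eq_Icc h, sum_insert (by simp), genPoly]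

theorem genPoly_comp_sub_one :
    genPoly (fun k => v (k - 1)) (r + 1) (n + 1) = X * genPoly v r n := by
  rw [genPoly, ← image_add_right_Icc, sum_image (by simp), genPoly, mul_sum]
  refine sum_congr rfl fun k _ => ?_
  simp only [Nat.cast_add, Nat.cast_one, add_sub_cancel_right, pow_succ]
  ring

theorem genPoly_Lop_succ {lam mu : ℝ} (h : r ≤ n + 1) :
    genPoly (Lop lam mu v) r (n + 1) = (C lam + C mu * X) * genPoly v r n
      + C (lam * v (n + 1)) * X ^ (n + 1) + C (mu * v (r - 1)) * X ^ r := by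
  rw [show Lop lam mu v = fun k => lam * v k + mu * v (k - 1) from rfl,
    genPoly_linearCombination, genPoly_succ_right h,
    genPoly_eq_C_mul_X_pow_add (v := fun k => v (k - 1)) h, genPoly_comp_sub_one, C_mul, C_mul]
  ring

end genPoly

def HasNonnegCoeffs (p : ℝ[X]) : Prop := ∀ t, 0 ≤ p.coeff t

namespace HasNonnegCoeffs

variable {p q : ℝ[X]}

theorem add (hp : HasNonnegCoeffs p) (hq : HasNonnegCoeffs q) : HasNonnegCoeffs (p + q) :=
  fun t => by rw [coeff_add]; exact add_nonneg (hp t) (hq t)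

theorem C_mul_X_pow_mul {a : ℝ} (ha : 0 ≤ a) (k : ℕ) (hp : HasNonnegCoeffs p) :
    HasNonnegCoeffs (C a * X ^ k * p) := fun t => by
  rw [mul_assoc, coeff_C_mul, coeff_X_pow_mul']
  split_ifs
  · exact mul_nonneg ha (hp _)
  · simp

theorem C_mul_X_pow {a : ℝ} (ha : 0 ≤ a) (k : ℕ) : HasNonnegCoeffs (C a * X ^ k) := fun t => by
  rw [coeff_C_mul_X_pow]
  split_ifs
  · exact ha
  · rfl

end HasNonnegCoeffs

theorem hasNonnegCoeffs_genPoly {v : ℤ → ℝ} {r n : ℕ}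
    (h : ∀ k : ℕ, r ≤ k → k ≤ n → 0 ≤ v k) : HasNonnegCoeffs (genPoly v r n) := fun t => by
  rw [genPoly, finsetSum_coeff]
  refine sum_nonneg fun k hk => ?_
  obtain ⟨hrk, hkn⟩ := mem_Icc.1 hk
  exact HasNonnegCoeffs.C_mul_X_pow (h k hrk hkn) k t

section LogConcavity

variable {lam mu : ℝ} {v : ℤ → ℝ} {r m : ℕ}

theorem hasNonnegCoeffs_lam_bracket (hlam : 0 ≤ lam) (hmu : 0 ≤ mu) (hv0 : ∀ k, 0 ≤ v k)
    (hv : IsPF2 v) (h : r ≤ m) :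
    HasNonnegCoeffs (C (v (m + 1)) * genPoly (Lop lam mu v) r (m + 1)
      - C (Lop lam mu v (m + 1 + 1)) * (X * genPoly v r m)) := by
  have hsplit : C (v (m + 1)) * genPoly (Lop lam mu v) r (m + 1)
      - C (Lop lam mu v (m + 1 + 1)) * (X * genPoly v r m)
      = C (v (m + 1) * Lop lam mu v r) * X ^ r + genPoly (fun k => v (m + 1) * Lop lam mu v k
        + -Lop lam mu v (m + 1 + 1) * v (k - 1)) (r + 1) (m + 1) := by
    rw [genPoly_eq_C_mul_X_pow_add (by omega), ← genPoly_comp_sub_one, genPoly_linearCombination,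
      C_mul, C_neg]
    ring
  rw [hsplit]
  refine (HasNonnegCoeffs.C_mul_X_pow (mul_nonneg (hv0 _) (Lop_nonneg hlam hmu hv0 _)) r).add
    (hasNonnegCoeffs_genPoly fun k hrk hkm => ?_)
  have hminor := hv (show (k : ℤ) ≤ m + 1 by omega)
  simp only [Lop, add_sub_cancel_right]
  nlinarith [mul_nonneg hlam (sub_nonneg.2 hminor)]

theorem hasNonnegCoeffs_mu_bracket (hlam : 0 ≤ lam) (hmu : 0 ≤ mu) (hv0 : ∀ k, 0 ≤ v k)
    (hv : IsPF2 v) (h : r ≤ m) :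
    HasNonnegCoeffs (C (v (r - 1)) * genPoly (Lop lam mu v) r (m + 1)
      - C (Lop lam mu v (r - 1)) * genPoly v r m) := by
  have hsplit : C (v (r - 1)) * genPoly (Lop lam mu v) r (m + 1)
      - C (Lop lam mu v (r - 1)) * genPoly v r m
      = C (v (r - 1) * Lop lam mu v (m + 1)) * X ^ (m + 1) + genPoly (fun k => v (r - 1) *
        Lop lam mu v k + -Lop lam mu v (r - 1) * v k) r m := by
    rw [genPoly_succ_right (by omega), genPoly_linearCombination, C_mul, C_neg]
    ring
  rw [hsplit]
  refine (HasNonnegCoeffs.C_mul_X_pow (mul_nonneg (hv0 _) (Lop_nonneg hlam hmu hv0 _)) _).add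
    (hasNonnegCoeffs_genPoly fun k hrk hkm => ?_)
  have hminor := hv (show (r : ℤ) - 1 ≤ k - 1 by omega)
  simp only [sub_add_cancel] at hminor
  simp only [Lop]
  nlinarith [mul_nonneg hmu (sub_nonneg.2 hminor)]

theorem hasNonnegCoeffs_genPoly_Lop_sq_sub (hlam : 0 ≤ lam) (hmu : 0 ≤ mu)
    (hv0 : ∀ k, 0 ≤ v k) (hv : IsPF2 v) (h : r ≤ m) :
    HasNonnegCoeffs (genPoly (Lop lam mu v) r (m + 1) ^ 2
      - genPoly v r m * genPoly (Lop lam mu (Lop lam mu v)) r (m + 1 + 1)) := by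
  have hQ := genPoly_Lop_succ (lam := lam) (mu := mu) (v := v) (show r ≤ m + 1 by omega)
  have hR := genPoly_Lop_succ (lam := lam) (mu := mu) (v := Lop lam mu v) (n := m + 1)
    (show r ≤ m + 1 + 1 by omega)
  push_cast at hR
  simp only [C_mul] at hQ hR
  have hsplit : genPoly (Lop lam mu v) r (m + 1) ^ 2
      - genPoly v r m * genPoly (Lop lam mu (Lop lam mu v)) r (m + 1 + 1)
      = C lam * X ^ (m + 1) * (C (v (m + 1)) * genPoly (Lop lam mu v) r (m + 1)
          - C (Lop lam mu v (m + 1 + 1)) * (X * genPoly v r m))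
        + C mu * X ^ r * (C (v (r - 1)) * genPoly (Lop lam mu v) r (m + 1)
          - C (Lop lam mu v (r - 1)) * genPoly v r m) := by
    linear_combination genPoly (Lop lam mu v) r (m + 1) * hQ - genPoly v r m * hR
  rw [hsplit]
  exact (HasNonnegCoeffs.C_mul_X_pow_mul hlam _
    (hasNonnegCoeffs_lam_bracket hlam hmu hv0 hv h)).add
    (HasNonnegCoeffs.C_mul_X_pow_mul hmu _ (hasNonnegCoeffs_mu_bracket hlam hmu hv0 hv h))

theorem hasNonnegCoeffs_genPoly_iterate_Lop_sq_sub (hlam : 0 ≤ lam) (hmu : 0 ≤ mu)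
    {u : ℤ → ℝ} (hu0 : ∀ k, 0 ≤ u k) (hu : IsPF2 u) (h : r ≤ m) :
    HasNonnegCoeffs (genPoly ((Lop lam mu)^[m + 1] u) r (m + 1) ^ 2
      - genPoly ((Lop lam mu)^[m] u) r m * genPoly ((Lop lam mu)^[m + 1 + 1] u) r (m + 1 + 1)) := by
  have hv0 : ∀ k, 0 ≤ (Lop lam mu)^[m] u k :=
    Function.Iterate.rec (fun w : ℤ → ℝ => ∀ k, 0 ≤ w k) hu0 (fun _ => Lop_nonneg hlam hmu) m
  have hv : IsPF2 ((Lop lam mu)^[m] u) :=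
    Function.Iterate.rec IsPF2 hu (fun _ => IsPF2.Lop hlam hmu) m
  simpa only [Function.iterate_succ_apply'] using
    hasNonnegCoeffs_genPoly_Lop_sq_sub hlam hmu hv0 hv h

end LogConcavity

/-- Theorem 3.1: for `λ, μ ≥ 0` and a nonnegative log-concave
sequence `u : ℤ → ℝ` (no internal zeros), the triangle
`a(n,k) = ℒⁿ[λ,μ](u)_k` is double LC-positive: for each `r`, both sequences of
polynomials `∑_{k=r}^n a(n,k) q^k` and `∑_{k=r}^n a(n,n-k) q^k` are
q-log-concave in `n`. -/
theorem stmt_13 (lam mu : ℝ) (hlam : 0 ≤ lam) (hmu : 0 ≤ mu)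
    (u : ℤ → ℝ)
    (hunonneg : ∀ k, 0 ≤ u k)
    (hulc : ∀ k : ℤ, u (k - 1) * u (k + 1) ≤ u k ^ 2)
    (huniz : ∀ i j k : ℤ, i < j → j < k → u i ≠ 0 → u k ≠ 0 → u j ≠ 0)
    (a : ℕ → ℕ → ℝ)
    (ha : ∀ n k : ℕ, a n k = ((Lop lam mu)^[n] u) (k : ℤ))
    (A Astar : ℕ → ℕ → ℝ[X])
    (hA : ∀ r n : ℕ, A r n = ∑ k ∈ Icc r n, Polynomial.C (a n k) * X ^ k)
    (hAstar : ∀ r n : ℕ, Astar r n = ∑ k ∈ Icc r n, Polynomial.C (a n (n - k)) * X ^ k) :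
    ∀ r n : ℕ, r + 1 ≤ n → ∀ t : ℕ,
      0 ≤ ((A r n) ^ 2 - A r (n - 1) * A r (n + 1)).coeff t ∧
      0 ≤ ((Astar r n) ^ 2 - Astar r (n - 1) * Astar r (n + 1)).coeff t := by
  have hpf : IsPF2 u := isPF2_of_logConcave hunonneg hulc huniz
  have hA' : ∀ r n, A r n = genPoly ((Lop lam mu)^[n] u) r n := fun r n => by
    rw [hA, genPoly]
    exact sum_congr rfl fun k _ => by rw [ha]
  have hAstar' : ∀ r n, Astar r n = genPoly ((Lop mu lam)^[n] (fun j => u (0 - j))) r n :=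
    fun r n => by
      rw [hAstar, genPoly, ← iterate_Lop_comp_sub]
      refine sum_congr rfl fun k hk => ?_
      rw [ha, Nat.cast_sub (mem_Icc.1 hk).2, zero_add]
  intro r n hn t
  obtain ⟨m, rfl⟩ : ∃ m, n = m + 1 := ⟨n - 1, by omega⟩
  simp only [Nat.add_sub_cancel, hA', hAstar']
  exact ⟨hasNonnegCoeffs_genPoly_iterate_Lop_sq_sub hlam hmu hunonneg hpf (by omega) t,
    hasNonnegCoeffs_genPoly_iterate_Lop_sq_sub hmu hlam (fun _ => hunonneg _) (hpf.comp_sub 0)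
      (by omega) t⟩
end
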